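/- Let (E_t, β_{s,t}) be a subproduct system of two-dimensional Hilbert spaces with a basis (x_t,y_t)_t of type E_5. Then for every automorphism (θ_t)_t of (E_t,β) there exist c, b ∈ ℝ such that θ_t x_t = e^{ict} x_t and θ_t y_t = e^{ib} e^{ict} y_t for all t. -/

import Mathlib

noncomputable section

open scoped TensorProduct ComplexConjugate

namespace SubprodHilbert

section TensorConstruction


variable {E F : Type*} [NormedAddCommGroup E] [InnerProductSpace ℂ E]
  [NormedAddCommGroup F] [InnerProductSpace ℂ F]

local notation "⟪" x ", " y "⟫" => @inner ℂ _ _ x y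

/-- For fixed `u, v`, the ℂ-bilinear functional `(u', v') ↦ ⟪u,u'⟫ ⟪v,v'⟫`. -/
def innerAux (u : E) (v : F) : E →ₗ[ℂ] F →ₗ[ℂ] ℂ :=
  LinearMap.mk₂ ℂ (fun u' v' => ⟪u, u'⟫ * ⟪v, v'⟫)
    (fun m₁ m₂ n => by simp [inner_add_right]; ring)
    (fun c m n => by simp [inner_smul_right]; ring)
    (fun m n₁ n₂ => by simp [inner_add_right]; ring)
    (fun c m n => by simp [inner_smul_right]; ring)

@[simp] lemma innerAux_apply (u u' : E) (v v' : F) :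
    innerAux u v u' v' = ⟪u, u'⟫ * ⟪v, v'⟫ := rfl

/-- The (conjugate-linear-in-the-first-variable) map sending `z : E ⊗ F` to the linear
functional `w ↦ ⟪z, w⟫`. -/
def innerFunc : E ⊗[ℂ] F →+ (E ⊗[ℂ] F →ₗ[ℂ] ℂ) :=
  TensorProduct.liftAddHom
    (AddMonoidHom.mk'
      (fun u => AddMonoidHom.mk' (fun v => TensorProduct.lift (innerAux u v))
        (fun v₁ v₂ => by
          apply TensorProduct.ext'
          intro u' v'
          simp [inner_add_left]
          ring))
      (fun u₁ u₂ => by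
        ext v : 1
        apply TensorProduct.ext'
        intro u' v'
        simp [inner_add_left]
        ring))
    (fun c u v => by
      apply TensorProduct.ext'
      intro u' v'
      simp [inner_smul_left]
      ring)

@[simp] lemma innerFunc_tmul (u u' : E) (v v' : F) :
    innerFunc (u ⊗ₜ[ℂ] v) (u' ⊗ₜ[ℂ] v') = ⟪u, u'⟫ * ⟪v, v'⟫ := rfl

lemma innerFunc_smul (c : ℂ) (z : E ⊗[ℂ] F) :
    innerFunc (c • z) = conj c • innerFunc z := by
  induction z using TensorProduct.induction_on with
  | zero => simp
  | tmul u v =>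
      rw [TensorProduct.smul_tmul']
      apply TensorProduct.ext'
      intro u' v'
      simp [inner_smul_left]
      ring
  | add z₁ z₂ h₁ h₂ => rw [smul_add, map_add, map_add, h₁, h₂, smul_add]

lemma innerFunc_conj_symm (z w : E ⊗[ℂ] F) :
    conj (innerFunc w z) = innerFunc z w := by
  induction z using TensorProduct.induction_on with
  | zero => simp
  | tmul u v =>
      induction w using TensorProduct.induction_on with
      | zero => simp
      | tmul u' v' =>
          simp only [innerFunc_tmul, map_mul, inner_conj_symm]
      | add w₁ w₂ h₁ h₂ => simp [map_add, h₁, h₂]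
  | add z₁ z₂ h₁ h₂ => simp [map_add, h₁, h₂]

lemma exists_orthonormal_rep (z : E ⊗[ℂ] F) :
    ∃ (n : ℕ) (e : Fin n → E) (w : Fin n → F),
      Orthonormal ℂ e ∧ z = ∑ i, e i ⊗ₜ[ℂ] w i := by
  obtain ⟨S, rfl⟩ := TensorProduct.exists_finset z
  set U : Submodule ℂ E := Submodule.span ℂ (Prod.fst '' (S : Set (E × F))) with hU
  haveI : FiniteDimensional ℂ U :=
    FiniteDimensional.span_of_finite ℂ (S.finite_toSet.image _)
  let b : OrthonormalBasis (Fin (Module.finrank ℂ U)) ℂ U := stdOrthonormalBasis ℂ U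
  have hone : Orthonormal ℂ (fun i => (b i : E)) := by
    have hb := b.orthonormal
    constructor
    · intro i; simpa [norm] using hb.1 i
    · intro i j hij; simpa [Submodule.coe_inner] using hb.2 hij
  refine ⟨_, fun i => (b i : E), fun i => ∑ p ∈ S, ⟪(b i : E), p.1⟫ • p.2, hone, ?_⟩
  have key : ∀ p ∈ S, p.1 ⊗ₜ[ℂ] p.2 = ∑ i, ⟪(b i : E), p.1⟫ • ((b i : E) ⊗ₜ[ℂ] p.2) := by
    intro p hp
    have hmem : p.1 ∈ U := Submodule.subset_span ⟨p, hp, rfl⟩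
    have hrep : ((∑ i, (⟪b i, (⟨p.1, hmem⟩ : U)⟫ : ℂ) • b i : U) : E) = p.1 := by
      rw [b.sum_repr' ⟨p.1, hmem⟩]
    have h2 : ∀ i, (⟪b i, (⟨p.1, hmem⟩ : U)⟫ : ℂ) = ⟪(b i : E), p.1⟫ := fun i =>
      Submodule.coe_inner U (b i) ⟨p.1, hmem⟩
    have hrep' : p.1 = ∑ i, ⟪(b i : E), p.1⟫ • (b i : E) := by
      calc p.1 = ((∑ i, (⟪b i, (⟨p.1, hmem⟩ : U)⟫ : ℂ) • b i : U) : E) := hrep.symm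
        _ = ∑ i, (⟪b i, (⟨p.1, hmem⟩ : U)⟫ : ℂ) • (b i : E) := by push_cast; rfl
        _ = ∑ i, ⟪(b i : E), p.1⟫ • (b i : E) := Finset.sum_congr rfl fun i _ => by rw [h2]
    calc p.1 ⊗ₜ[ℂ] p.2 = (∑ i, ⟪(b i : E), p.1⟫ • (b i : E)) ⊗ₜ[ℂ] p.2 := by rw [← hrep']
      _ = ∑ i, ⟪(b i : E), p.1⟫ • ((b i : E) ⊗ₜ[ℂ] p.2) := by
          rw [TensorProduct.sum_tmul]
          refine Finset.sum_congr rfl fun i _ => ?_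
          rw [TensorProduct.smul_tmul']
  calc ∑ p ∈ S, p.1 ⊗ₜ[ℂ] p.2
      = ∑ p ∈ S, ∑ i, ⟪(b i : E), p.1⟫ • ((b i : E) ⊗ₜ[ℂ] p.2) :=
        Finset.sum_congr rfl key
    _ = ∑ i, ∑ p ∈ S, ⟪(b i : E), p.1⟫ • ((b i : E) ⊗ₜ[ℂ] p.2) := Finset.sum_comm
    _ = ∑ i, (b i : E) ⊗ₜ[ℂ] (∑ p ∈ S, ⟪(b i : E), p.1⟫ • p.2) := by
        refine Finset.sum_congr rfl fun i _ => ?_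
        rw [TensorProduct.tmul_sum]
        refine Finset.sum_congr rfl fun p _ => ?_
        rw [TensorProduct.tmul_smul]

lemma innerFunc_self (n : ℕ) (e : Fin n → E) (w : Fin n → F) (he : Orthonormal ℂ e) :
    innerFunc (∑ i, e i ⊗ₜ[ℂ] w i) (∑ i, e i ⊗ₜ[ℂ] w i) = ∑ i, ⟪w i, w i⟫ := by
  have hee : ∀ i j, (⟪e i, e j⟫ : ℂ) = if i = j then 1 else 0 := orthonormal_iff_ite.mp he
  simp only [map_sum, LinearMap.coe_sum, Finset.sum_apply, innerFunc_tmul, hee, ite_mul,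
    one_mul, zero_mul]
  rw [Finset.sum_comm]
  simp

/-- The inner-product-space core on the algebraic tensor product of two complex
inner product spaces, determined by `⟪u ⊗ v, u' ⊗ v'⟫ = ⟪u,u'⟫ ⟪v,v'⟫`. -/
def tensorCore : InnerProductSpace.Core ℂ (E ⊗[ℂ] F) where
  inner z w := innerFunc z w
  conj_inner_symm := innerFunc_conj_symm
  re_inner_nonneg z := by
    show 0 ≤ RCLike.re (innerFunc z z)
    obtain ⟨n, e, w, he, rfl⟩ := exists_orthonormal_rep z
    rw [innerFunc_self n e w he]
    rw [map_sum]
    exact Finset.sum_nonneg fun i _ => inner_self_nonneg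
  add_left z₁ z₂ w := by
    show innerFunc (z₁ + z₂) w = innerFunc z₁ w + innerFunc z₂ w
    rw [map_add]; rfl
  smul_left z w c := by
    show innerFunc (c • z) w = conj c * innerFunc z w
    rw [innerFunc_smul]; rfl
  definite z hz := by
    replace hz : innerFunc z z = 0 := hz
    obtain ⟨n, e, w, he, rfl⟩ := exists_orthonormal_rep z
    rw [innerFunc_self n e w he] at hz
    have hz' : ∑ i, (‖w i‖ ^ 2 : ℝ) = 0 := by
      have := congrArg Complex.re hz
      simpa [← @inner_self_eq_norm_sq ℂ] using this
    have hw : ∀ i ∈ Finset.univ, w i = 0 := by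
      intro i hi
      have h0 : (‖w i‖ ^ 2 : ℝ) = 0 :=
        (Finset.sum_eq_zero_iff_of_nonneg fun j _ => sq_nonneg _).mp hz' i hi
      simpa using h0
    calc ∑ i, e i ⊗ₜ[ℂ] w i = ∑ i : Fin n, (0 : E ⊗[ℂ] F) :=
          Finset.sum_congr rfl fun i hi => by rw [hw i hi, TensorProduct.tmul_zero]
      _ = 0 := Finset.sum_const_zero

instance tensorNormedAddCommGroup : NormedAddCommGroup (E ⊗[ℂ] F) :=
  @InnerProductSpace.Core.toNormedAddCommGroup ℂ _ _ _ _ tensorCore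

instance tensorInnerProductSpace : InnerProductSpace ℂ (E ⊗[ℂ] F) :=
  InnerProductSpace.ofCore tensorCore.toCore

@[simp] lemma inner_tmul (u u' : E) (v v' : F) :
    (inner ℂ (u ⊗ₜ[ℂ] v) (u' ⊗ₜ[ℂ] v') : ℂ) = ⟪u, u'⟫ * ⟪v, v'⟫ := rfl
end TensorConstruction


/-- Cast between the fibers of a family of inner product spaces along an equality of
indices, as a linear isometric isomorphism. -/
def castE {ι : Type*} (E : ι → Type*) [∀ t, NormedAddCommGroup (E t)]
    [∀ t, InnerProductSpace ℂ (E t)] {a b : ι} (h : a = b) : E a ≃ₗᵢ[ℂ] E b := by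
  subst h; exact LinearIsometryEquiv.refl ℂ (E a)


section Discrete

variable (E F : ℕ+ → Type*)
  [∀ t, NormedAddCommGroup (E t)] [∀ t, InnerProductSpace ℂ (E t)]
  [∀ t, NormedAddCommGroup (F t)] [∀ t, InnerProductSpace ℂ (F t)]
variable (β : ∀ s t : ℕ+, E (s + t) →ₗᵢ[ℂ] (E s ⊗[ℂ] E t))
variable (γ : ∀ s t : ℕ+, F (s + t) →ₗᵢ[ℂ] (F s ⊗[ℂ] F t))

/-- The associativity condition in the definition of a subproduct system. -/
def SubprodAssoc : Prop :=
  ∀ r s t : ℕ+, ∀ u : E (r + s + t),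
    (TensorProduct.assoc ℂ (E r) (E s) (E t))
      (TensorProduct.map (β r s).toLinearMap LinearMap.id (β (r + s) t u))
    = TensorProduct.map LinearMap.id (β s t).toLinearMap
        (β r (s + t) (castE E (add_assoc r s t) u))

/-- `(x, y)` is a basis of type `𝓔₁(a)` of the subproduct system `(E, β)`. -/
def IsBasisE1 (a : ℝ) (x y : ∀ t : ℕ+, E t) : Prop :=
  (∀ t, ‖x t‖ = 1) ∧ (∀ t, ‖y t‖ = 1) ∧
  (∀ t : ℕ+, (inner ℂ (x t) (y t) : ℂ) = (a : ℂ) ^ (t : ℕ)) ∧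
  (∀ s t : ℕ+, β s t (x (s + t)) = x s ⊗ₜ[ℂ] x t) ∧
  (∀ s t : ℕ+, β s t (y (s + t)) = y s ⊗ₜ[ℂ] y t)

/-- `(x, y)` is a basis of type `𝓔₂(a)` of the subproduct system `(E, β)`. -/
def IsBasisE2 (a : ℝ) (x y : ∀ t : ℕ+, E t) : Prop :=
  (∀ t, ‖x t‖ = 1) ∧ (∀ t, ‖y t‖ = 1) ∧
  (∀ t : ℕ+, (inner ℂ (x t) (y t) : ℂ) = (a : ℂ) ^ (t : ℕ)) ∧
  (∀ s t : ℕ+, Even (s : ℕ) → β s t (x (s + t)) = x s ⊗ₜ[ℂ] x t) ∧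
  (∀ s t : ℕ+, ¬ Even (s : ℕ) → β s t (x (s + t)) = x s ⊗ₜ[ℂ] y t) ∧
  (∀ s t : ℕ+, Even (s : ℕ) → β s t (y (s + t)) = y s ⊗ₜ[ℂ] y t) ∧
  (∀ s t : ℕ+, ¬ Even (s : ℕ) → β s t (y (s + t)) = y s ⊗ₜ[ℂ] x t)

/-- `(x, y)` is a basis of type `𝓔₃(λ)` of the subproduct system `(E, β)`. -/
def IsBasisE3 (l : ℂ) (x y : ∀ t : ℕ+, E t) : Prop :=
  (∀ t, ‖x t‖ = 1) ∧
  (∀ t : ℕ+, ‖y t‖ ^ 2 = ∑ k ∈ Finset.range (t : ℕ), ‖l‖ ^ (2 * k)) ∧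
  (∀ t : ℕ+, (inner ℂ (x t) (y t) : ℂ) = 0) ∧
  (∀ s t : ℕ+, β s t (x (s + t)) = x s ⊗ₜ[ℂ] x t) ∧
  (∀ s t : ℕ+, β s t (y (s + t)) = y s ⊗ₜ[ℂ] x t + l ^ (s : ℕ) • (x s ⊗ₜ[ℂ] y t))

/-- `(x, y)` is a basis of type `𝓔₄` of the subproduct system `(E, β)`. -/
def IsBasisE4 (x y : ∀ t : ℕ+, E t) : Prop :=
  (∀ t, ‖x t‖ = 1) ∧ (∀ t, ‖y t‖ = 1) ∧
  (∀ t : ℕ+, (inner ℂ (x t) (y t) : ℂ) = 0) ∧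
  (∀ s t : ℕ+, β s t (x (s + t)) = x s ⊗ₜ[ℂ] x t) ∧
  (∀ s t : ℕ+, β s t (y (s + t)) = y s ⊗ₜ[ℂ] x t)

/-- `(x, y)` is a basis of type `𝓔₅` of the subproduct system `(E, β)`. -/
def IsBasisE5 (x y : ∀ t : ℕ+, E t) : Prop :=
  (∀ t, ‖x t‖ = 1) ∧ (∀ t, ‖y t‖ = 1) ∧
  (∀ t : ℕ+, (inner ℂ (x t) (y t) : ℂ) = 0) ∧
  (∀ s t : ℕ+, β s t (x (s + t)) = x s ⊗ₜ[ℂ] x t) ∧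
  (∀ s t : ℕ+, β s t (y (s + t)) = x s ⊗ₜ[ℂ] y t)

/-- The five types of bases, together with their parameters. -/
inductive BType : Type
  | e1 (a : ℝ) | e2 (a : ℝ) | e3 (l : ℂ) | e4 | e5

/-- `(x, y)` is a basis of the subproduct system `(E, β)` of the given type (this includes
the admissibility constraints `a ∈ [0,1)`, resp. `λ ≠ 0`, on the parameter). -/
def IsBasisOfType : BType → (∀ t : ℕ+, E t) → (∀ t : ℕ+, E t) → Prop
  | .e1 a => fun x y => 0 ≤ a ∧ a < 1 ∧ IsBasisE1 E β a x y
  | .e2 a => fun x y => 0 ≤ a ∧ a < 1 ∧ IsBasisE2 E β a x y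
  | .e3 l => fun x y => l ≠ 0 ∧ IsBasisE3 E β l x y
  | .e4 => fun x y => IsBasisE4 E β x y
  | .e5 => fun x y => IsBasisE5 E β x y

/-- The family `θ` of unitaries intertwines the subproduct systems `(E, β)` and `(F, γ)`,
i.e. it is an isomorphism of subproduct systems. -/
def Intertwines (θ : ∀ t : ℕ+, E t ≃ₗᵢ[ℂ] F t) : Prop :=
  ∀ s t : ℕ+, ∀ w : E (s + t),
    γ s t (θ (s + t) w) =
      TensorProduct.map (θ s).toLinearEquiv.toLinearMap (θ t).toLinearEquiv.toLinearMap
        (β s t w)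

/-- The structure maps of the subproduct system `(E_{mt})_t` obtained by restricting
`(E, β)` to the multiples of `m`. -/
def restrictβ (m : ℕ+) :
    ∀ s t : ℕ+, E (m * (s + t)) →ₗᵢ[ℂ] (E (m * s) ⊗[ℂ] E (m * t)) := fun s t =>
  (β (m * s) (m * t)).comp (castE E (by rw [mul_add])).toLinearIsometry

end Discrete


/-! Since `E (s + t)` is spanned by `x (s + t)` and `y (s + t)`, every `β s t w` lies in the
span of `x s ⊗ x t` and `x s ⊗ y t`. Pairing the intertwining relation
`β t t (θ (t + t) (x (t + t))) = θ t (x t) ⊗ θ t (x t)` with `y t ⊗ y t` gives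
`⟪y t, θ t (x t)⟫² = 0`, so `θ t (x t) = A t • x t`, and unitarity of `θ t` then forces
`θ t (y t) = D t • y t`, with `‖A t‖ = ‖D t‖ = 1`. Pairing with `x s ⊗ x t` and
`x s ⊗ y t` gives `A (s + t) = A s * A t` and `D (s + t) = A s * D t`, hence `A t = (A 1) ^ t` and
`D t = (D 1 / A 1) * A t`. -/

lemma eq_inner_smul_add_inner_smul_of_finrank_eq_two {V : Type*} [NormedAddCommGroup V]
    [InnerProductSpace ℂ V] (hdim : Module.finrank ℂ V = 2) {x y : V}
    (hxy : Orthonormal ℂ ![x, y]) (v : V) :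
    v = (inner ℂ x v : ℂ) • x + (inner ℂ y v : ℂ) • y := by
  have : FiniteDimensional ℂ V := .of_finrank_eq_succ hdim
  let b : OrthonormalBasis (Fin 2) ℂ V :=
    (basisOfOrthonormalOfCardEqFinrank hxy (by simp [hdim])).toOrthonormalBasis
      (by rwa [coe_basisOfOrthonormalOfCardEqFinrank])
  have hb : ⇑b = ![x, y] := by
    simp [b, Module.Basis.coe_toOrthonormalBasis, coe_basisOfOrthonormalOfCardEqFinrank]
  simpa [Fin.sum_univ_two, hb] using (b.sum_repr' v).symm

lemma PNat.eq_pow_of_map_add {M : Type*} [Monoid M] {f : ℕ+ → M}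
    (hf : ∀ s t, f (s + t) = f s * f t) (t : ℕ+) : f t = f 1 ^ (t : ℕ) := by
  induction t using PNat.recOn with
  | one => simp
  | succ n ih => rw [hf, ih, PNat.add_coe, PNat.one_coe, pow_succ]

lemma PNat.eq_div_mul_of_map_add {G₀ : Type*} [CommGroupWithZero G₀] {f g : ℕ+ → G₀}
    (hf1 : f 1 ≠ 0) (hf : ∀ s t, f (s + t) = f s * f t) (hg : ∀ s t, g (s + t) = f s * g t)
    (t : ℕ+) : g t = g 1 / f 1 * f t := by
  induction t using PNat.recOn with
  | one => rw [div_mul_cancel₀ _ hf1]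
  | succ n _ => rw [hg, hf, mul_left_comm, div_mul_cancel₀ _ hf1]

section BasisE5

variable {E : ℕ+ → Type*} [∀ t, NormedAddCommGroup (E t)] [∀ t, InnerProductSpace ℂ (E t)]
  {β : ∀ s t : ℕ+, E (s + t) →ₗᵢ[ℂ] (E s ⊗[ℂ] E t)} {x y : ∀ t : ℕ+, E t}

lemma IsBasisE5.orthonormal (hxy : IsBasisE5 E β x y) (t : ℕ+) :
    Orthonormal ℂ ![x t, y t] := by
  obtain ⟨hx, hy, hxy, -⟩ := hxy
  rw [orthonormal_iff_ite]
  intro i j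
  fin_cases i <;> fin_cases j <;> simp [hx, hy, hxy, inner_eq_zero_symm.mp (hxy t)]

lemma IsBasisE5.map_eq_smul_add_smul (hxy : IsBasisE5 E β x y)
    (hdim : ∀ t, Module.finrank ℂ (E t) = 2) (s t : ℕ+) (w : E (s + t)) :
    β s t w = (inner ℂ (x (s + t)) w : ℂ) • (x s ⊗ₜ[ℂ] x t)
      + (inner ℂ (y (s + t)) w : ℂ) • (x s ⊗ₜ[ℂ] y t) := by
  conv_lhs => rw [eq_inner_smul_add_inner_smul_of_finrank_eq_two (hdim _) (hxy.orthonormal _) w]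
  rw [map_add, map_smul, map_smul, hxy.2.2.2.1, hxy.2.2.2.2]

variable {θ : ∀ t : ℕ+, E t ≃ₗᵢ[ℂ] E t}

lemma Intertwines.map_apply_x (hθ : Intertwines E E β β θ) (hxy : IsBasisE5 E β x y)
    (s t : ℕ+) :
    β s t (θ (s + t) (x (s + t))) = θ s (x s) ⊗ₜ[ℂ] θ t (x t) := by
  rw [hθ, hxy.2.2.2.1, TensorProduct.map_tmul]; rfl

lemma Intertwines.map_apply_y (hθ : Intertwines E E β β θ) (hxy : IsBasisE5 E β x y)
    (s t : ℕ+) :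
    β s t (θ (s + t) (y (s + t))) = θ s (x s) ⊗ₜ[ℂ] θ t (y t) := by
  rw [hθ, hxy.2.2.2.2, TensorProduct.map_tmul]; rfl

/- Coefficients in `E s ⊗ E t` are read off with `innerFunc`, the inner product of the tensor
structure above: `inner ℂ` on a tensor product would elaborate to Mathlib's own instance. -/
lemma IsBasisE5.inner_y_apply_x_eq_zero (hxy : IsBasisE5 E β x y)
    (hdim : ∀ t, Module.finrank ℂ (E t) = 2) (hθ : Intertwines E E β β θ) (t : ℕ+) :
    (inner ℂ (y t) (θ t (x t)) : ℂ) = 0 := by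
  have h := congrArg (innerFunc (y t ⊗ₜ[ℂ] y t))
    (hxy.map_eq_smul_add_smul hdim t t (θ (t + t) (x (t + t))))
  rw [hθ.map_apply_x hxy] at h
  simpa [inner_eq_zero_symm.mp (hxy.2.2.1 t)] using h

lemma IsBasisE5.apply_x_eq_smul (hxy : IsBasisE5 E β x y)
    (hdim : ∀ t, Module.finrank ℂ (E t) = 2) (hθ : Intertwines E E β β θ) (t : ℕ+) :
    θ t (x t) = (inner ℂ (x t) (θ t (x t)) : ℂ) • x t := by
  conv_lhs => rw [eq_inner_smul_add_inner_smul_of_finrank_eq_two (hdim t) (hxy.orthonormal t)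
    (θ t (x t)), hxy.inner_y_apply_x_eq_zero hdim hθ, zero_smul, add_zero]

lemma IsBasisE5.inner_x_apply_x_add (hxy : IsBasisE5 E β x y)
    (hdim : ∀ t, Module.finrank ℂ (E t) = 2) (hθ : Intertwines E E β β θ) (s t : ℕ+) :
    (inner ℂ (x (s + t)) (θ (s + t) (x (s + t))) : ℂ)
      = inner ℂ (x s) (θ s (x s)) * inner ℂ (x t) (θ t (x t)) := by
  have h := congrArg (innerFunc (x s ⊗ₜ[ℂ] x t))
    (hxy.map_eq_smul_add_smul hdim s t (θ (s + t) (x (s + t))))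
  rw [hθ.map_apply_x hxy] at h
  simpa [hxy.1, hxy.2.2.1] using h.symm

lemma IsBasisE5.inner_y_apply_y_add (hxy : IsBasisE5 E β x y)
    (hdim : ∀ t, Module.finrank ℂ (E t) = 2) (hθ : Intertwines E E β β θ) (s t : ℕ+) :
    (inner ℂ (y (s + t)) (θ (s + t) (y (s + t))) : ℂ)
      = inner ℂ (x s) (θ s (x s)) * inner ℂ (y t) (θ t (y t)) := by
  have h := congrArg (innerFunc (x s ⊗ₜ[ℂ] y t))
    (hxy.map_eq_smul_add_smul hdim s t (θ (s + t) (y (s + t))))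
  rw [hθ.map_apply_y hxy] at h
  simpa [hxy.1, hxy.2.1, inner_eq_zero_symm.mp (hxy.2.2.1 t)] using h.symm

lemma IsBasisE5.norm_inner_x_apply_x (hxy : IsBasisE5 E β x y)
    (hdim : ∀ t, Module.finrank ℂ (E t) = 2) (hθ : Intertwines E E β β θ) (t : ℕ+) :
    ‖(inner ℂ (x t) (θ t (x t)) : ℂ)‖ = 1 := by
  have h := (θ t).norm_map (x t)
  rwa [hxy.apply_x_eq_smul hdim hθ, norm_smul, hxy.1 t, mul_one] at h

lemma IsBasisE5.apply_y_eq_smul (hxy : IsBasisE5 E β x y)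
    (hdim : ∀ t, Module.finrank ℂ (E t) = 2) (hθ : Intertwines E E β β θ) (t : ℕ+) :
    θ t (y t) = (inner ℂ (y t) (θ t (y t)) : ℂ) • y t := by
  have hx0 : (inner ℂ (x t) (θ t (y t)) : ℂ) = 0 := by
    have h := (θ t).inner_map_map (x t) (y t)
    rw [hxy.apply_x_eq_smul hdim hθ, hxy.2.2.1, inner_smul_left, mul_eq_zero, map_eq_zero] at h
    have hA := hxy.norm_inner_x_apply_x hdim hθ t
    exact h.resolve_left fun h0 => by simp [h0] at hA
  conv_lhs => rw [eq_inner_smul_add_inner_smul_of_finrank_eq_two (hdim t) (hxy.orthonormal t)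
    (θ t (y t)), hx0, zero_smul, zero_add]

lemma IsBasisE5.norm_inner_y_apply_y (hxy : IsBasisE5 E β x y)
    (hdim : ∀ t, Module.finrank ℂ (E t) = 2) (hθ : Intertwines E E β β θ) (t : ℕ+) :
    ‖(inner ℂ (y t) (θ t (y t)) : ℂ)‖ = 1 := by
  have h := (θ t).norm_map (y t)
  rwa [hxy.apply_y_eq_smul hdim hθ, norm_smul, hxy.2.1 t, mul_one] at h

end BasisE5

theorem statement7_general
    (E : ℕ+ → Type*) [∀ t, NormedAddCommGroup (E t)] [∀ t, InnerProductSpace ℂ (E t)]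
    (hdim : ∀ t, Module.finrank ℂ (E t) = 2)
    (β : ∀ s t : ℕ+, E (s + t) →ₗᵢ[ℂ] (E s ⊗[ℂ] E t))
    (x y : ∀ t : ℕ+, E t) (hxy : IsBasisE5 E β x y)
    (θ : ∀ t : ℕ+, E t ≃ₗᵢ[ℂ] E t) (hθ : Intertwines E E β β θ) :
    ∃ c b : ℝ, ∀ t : ℕ+,
      θ t (x t) = Complex.exp (Complex.I * (c : ℂ) * ((t : ℕ) : ℂ)) • x t ∧
      θ t (y t) = (Complex.exp (Complex.I * (b : ℂ)) *
        Complex.exp (Complex.I * (c : ℂ) * ((t : ℕ) : ℂ))) • y t := by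
  set A : ℕ+ → ℂ := fun t => inner ℂ (x t) (θ t (x t))
  set D : ℕ+ → ℂ := fun t => inner ℂ (y t) (θ t (y t))
  have hA_add : ∀ s t, A (s + t) = A s * A t := hxy.inner_x_apply_x_add hdim hθ
  have hA1 : A 1 ≠ 0 :=
    norm_ne_zero_iff.mp ((hxy.norm_inner_x_apply_x hdim hθ 1).symm ▸ one_ne_zero)
  obtain ⟨c, hc⟩ := (Complex.norm_eq_one_iff (A 1)).mp (hxy.norm_inner_x_apply_x hdim hθ 1)
  obtain ⟨b, hb⟩ := (Complex.norm_eq_one_iff (D 1 / A 1)).mp <| by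
    rw [norm_div, hxy.norm_inner_y_apply_y hdim hθ, hxy.norm_inner_x_apply_x hdim hθ, div_one]
  have hA : ∀ t : ℕ+, A t = Complex.exp (Complex.I * c * ((t : ℕ) : ℂ)) := fun t => by
    rw [PNat.eq_pow_of_map_add hA_add t, ← hc, ← Complex.exp_nat_mul]
    ring_nf
  have hD : ∀ t : ℕ+, D t = Complex.exp (Complex.I * b) * A t := fun t => by
    rw [PNat.eq_div_mul_of_map_add (g := D) hA1 hA_add (hxy.inner_y_apply_y_add hdim hθ) t, ← hb,
      mul_comm (b : ℂ)]
  refine ⟨c, b, fun t => ⟨?_, ?_⟩⟩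
  · rw [hxy.apply_x_eq_smul hdim hθ, ← hA]
  · rw [hxy.apply_y_eq_smul hdim hθ, ← hA, ← hD]

/-- **Lemma 1.11, case `𝓔₅`.** -/
theorem statement7
    (E : ℕ+ → Type*) [∀ t, NormedAddCommGroup (E t)] [∀ t, InnerProductSpace ℂ (E t)]
    (hdim : ∀ t, Module.finrank ℂ (E t) = 2)
    (β : ∀ s t : ℕ+, E (s + t) →ₗᵢ[ℂ] (E s ⊗[ℂ] E t))
    (hassoc : SubprodAssoc E β)
    (x y : ∀ t : ℕ+, E t) (hxy : IsBasisE5 E β x y)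
    (θ : ∀ t : ℕ+, E t ≃ₗᵢ[ℂ] E t) (hθ : Intertwines E E β β θ) :
    ∃ c b : ℝ, ∀ t : ℕ+,
      θ t (x t) = Complex.exp (Complex.I * (c : ℂ) * ((t : ℕ) : ℂ)) • x t ∧
      θ t (y t) = (Complex.exp (Complex.I * (b : ℂ)) *
        Complex.exp (Complex.I * (c : ℂ) * ((t : ℕ) : ℂ))) • y t :=
  statement7_general E hdim β x y hxy θ hθ

end SubprodHilbert
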